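/- With the setup of the minimum confidence margin: if Mar(v, c₀) ≥ 0 requires preservation, then any v' with ‖v - v'‖ ≤ Mar(v, c₀) / max_{c ≠ c₀}(Lip_{c₀} + Lip_c) satisfies Mar(v', c₀) ≥ 0, i.e., the classifier's decision c₀ cannot change within this radius (assuming the max of Lipschitz sums is positive). -/
import Mathlib

theorem stmt_2 {V C : Type*} [NormedAddCommGroup V] [Fintype C] [DecidableEq C]
    (hC : 1 < Fintype.card C)
    (N : V → C → ℝ) (Lip : C → ℝ) (hLip : ∀ c, 0 ≤ Lip c)
    (hN : ∀ c, ∀ v v' : V, |N v c - N v' c| ≤ Lip c * ‖v - v'‖)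
    (c₀ : C) (hne : (Finset.univ.erase c₀).Nonempty)
    (hM : 0 < (Finset.univ.erase c₀).sup' hne (fun c => Lip c₀ + Lip c))
    (v v' : V)
    (hMar : 0 ≤ (Finset.univ.erase c₀).inf' hne (fun c => N v c₀ - N v c))
    (hdist : ‖v - v'‖ ≤
      (Finset.univ.erase c₀).inf' hne (fun c => N v c₀ - N v c) /
        (Finset.univ.erase c₀).sup' hne (fun c => Lip c₀ + Lip c)) :
    0 ≤ (Finset.univ.erase c₀).inf' hne (fun c => N v' c₀ - N v' c) := by
  set M := (Finset.univ.erase c₀).sup' hne (fun c => Lip c₀ + Lip c) with hMdef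
  set m := (Finset.univ.erase c₀).inf' hne (fun c => N v c₀ - N v c) with hmdef
  rw [Finset.le_inf'_iff]
  intro c hc
  have h0 : N v c₀ - N v c ≥ m := Finset.inf'_le _ hc
  have h1 : |N v c₀ - N v' c₀| ≤ Lip c₀ * ‖v - v'‖ := hN c₀ v v'
  have h2 : |N v c - N v' c| ≤ Lip c * ‖v - v'‖ := hN c v v'
  have h3 : Lip c₀ + Lip c ≤ M := Finset.le_sup' (fun c => Lip c₀ + Lip c) hc
  have h4 : M * ‖v - v'‖ ≤ m := by
    have := mul_le_mul_of_nonneg_left hdist hM.le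
    rwa [mul_div_cancel₀ _ hM.ne'] at this
  have e1 := abs_le.mp h1
  have e2 := abs_le.mp h2
  have h5 : (Lip c₀ + Lip c) * ‖v - v'‖ ≤ M * ‖v - v'‖ :=
    mul_le_mul_of_nonneg_right h3 (norm_nonneg _)
  nlinarith [norm_nonneg (v - v')]
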